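/- arXiv:math-ph/0408013 — 4 statements merged into one kernel-verified Lean document; each statement's English description precedes it below -/
import Mathlib

section
/- (Stability of spectral gaps.) Let A and B be bounded self-adjoint operators on a complex Hilbert space, and write B = B₊ − B₋ where B₊ and B₋ are bounded self-adjoint operators with B₊ ≥ 0 and B₋ ≥ 0. Assume the open interval (a, b) is contained in the resolvent set of A (i.e. (a,b) ∩ spectrum(A) = ∅) and that ‖B₊‖ + ‖B₋‖ < b − a. Then the open interval (a + ‖B₊‖, b − ‖B₋‖) is contained in the resolvent set of A + B. -/
/-!
Statement 7 (Stability of spectral gaps):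
Let `A`, `B` be bounded self-adjoint operators on a complex Hilbert space, `B = B₊ - B₋`
with `B₊, B₋ ≥ 0`. If `(a,b)` lies in the resolvent set of `A` and `‖B₊‖ + ‖B₋‖ < b - a`,
then `(a + ‖B₊‖, b - ‖B₋‖)` lies in the resolvent set of `A + B`.
-/

open scoped InnerProductSpace
open ContinuousLinearMap

set_option maxHeartbeats 1000000 in
theorem spectral_gap_stability
    {H : Type*} [NormedAddCommGroup H] [InnerProductSpace ℂ H] [CompleteSpace H]
    (A B Bp Bm : H →L[ℂ] H)
    (hA : IsSelfAdjoint A) (hB : IsSelfAdjoint B)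
    (hBp : IsSelfAdjoint Bp) (hBm : IsSelfAdjoint Bm)
    (hBpPos : ∀ x : H, 0 ≤ (⟪x, Bp x⟫_ℂ).re)
    (hBmPos : ∀ x : H, 0 ≤ (⟪x, Bm x⟫_ℂ).re)
    (hBdecomp : B = Bp - Bm)
    (a b : ℝ)
    (hgap : ∀ x ∈ Set.Ioo a b, (x : ℂ) ∉ spectrum ℂ A)
    (hnorm : ‖Bp‖ + ‖Bm‖ < b - a) :
    ∀ x ∈ Set.Ioo (a + ‖Bp‖) (b - ‖Bm‖), (x : ℂ) ∉ spectrum ℂ (A + B) := by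
  intro x hx
  obtain ⟨hx1, hx2⟩ := hx
  have hba : (0:ℝ) < b - a := lt_of_le_of_lt (by positivity) hnorm
  set δ : ℝ := min (x - a - ‖Bp‖) (b - ‖Bm‖ - x) with hδdef
  have hδ : 0 < δ := lt_min (by linarith) (by linarith)
  -- the continuous sign function for the gap
  set J : ℝ → ℝ := fun t => max (-1) (min 1 ((2*t - (a+b))/(b-a))) with hJdef
  have hJcont : Continuous J := by
    apply continuous_const.max
    apply continuous_const.min
    exact (by fun_prop : Continuous fun t : ℝ => 2*t - (a+b)).div_const _
  have hJa : ∀ t : ℝ, t ≤ a → J t = -1 := by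
    intro t ht
    have hv : (2*t - (a+b))/(b-a) ≤ -1 := by
      rw [div_le_iff₀ hba]; linarith
    exact max_eq_left (le_trans (min_le_right _ _) hv)
  have hJb : ∀ t : ℝ, b ≤ t → J t = 1 := by
    intro t ht
    have hv : (1:ℝ) ≤ (2*t - (a+b))/(b-a) := by
      rw [le_div_iff₀ hba]; linarith
    show max (-1) (min 1 ((2*t - (a+b))/(b-a))) = 1
    rw [min_eq_left hv]
    exact max_eq_right (by norm_num)
  have hspec : ∀ t ∈ spectrum ℝ A, t ≤ a ∨ b ≤ t := by
    intro t ht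
    by_contra hc
    push_neg at hc
    refine hgap t ⟨hc.1, hc.2⟩ ?_
    have := spectrum.algebraMap_mem ℂ ht
    simpa using this
  have hJsq : ∀ t ∈ spectrum ℝ A, J t * J t = 1 := by
    intro t ht
    rcases hspec t ht with h | h
    · rw [hJa t h]; ring
    · rw [hJb t h]; ring
  -- cfc operators
  have hcJ : ContinuousOn J (spectrum ℝ A) := hJcont.continuousOn
  set U : H →L[ℂ] H := cfc J A with hUdef
  set qp : ℝ → ℝ := fun t => (1 + J t)/2 with hqpdef
  set qm : ℝ → ℝ := fun t => (1 - J t)/2 with hqmdef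
  have hqpc : Continuous qp := by exact (continuous_const.add hJcont).div_const 2
  have hqmc : Continuous qm := by exact (continuous_const.sub hJcont).div_const 2
  set Pp : H →L[ℂ] H := cfc qp A with hPpdef
  set Pm : H →L[ℂ] H := cfc qm A with hPmdef
  have hUsa : IsSelfAdjoint U := cfc_predicate J A
  have hPpsa : IsSelfAdjoint Pp := cfc_predicate qp A
  have hPmsa : IsSelfAdjoint Pm := cfc_predicate qm A
  have hUU : U * U = 1 := by
    rw [hUdef, ← cfc_mul J J A hcJ hcJ,
      cfc_congr (fun t ht => hJsq t ht : (spectrum ℝ A).EqOn (fun t => J t * J t) 1),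
      cfc_const 1 A hA, map_one]
  have hPsum : Pp + Pm = 1 := by
    rw [hPpdef, hPmdef, ← cfc_add A qp qm hqpc.continuousOn hqmc.continuousOn,
      show (fun t => qp t + qm t) = fun _ : ℝ => (1:ℝ) from funext fun t => by
        simp only [hqpdef, hqmdef]; ring,
      cfc_const 1 A hA, map_one]
  have hUPp : U = Pp - Pm := by
    rw [hUdef, hPpdef, hPmdef, ← cfc_sub qp qm A hqpc.continuousOn hqmc.continuousOn]
    exact cfc_congr fun t _ => by simp only [hqpdef, hqmdef]; ring
  have hPmPm : Pm * Pm = Pm := by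
    rw [hPmdef, ← cfc_mul qm qm A hqmc.continuousOn hqmc.continuousOn]
    exact cfc_congr fun t ht => by
      have h2 := hJsq t ht
      simp only [hqmdef]
      nlinarith [h2]
  have hPpPp : Pp * Pp = Pp := by
    rw [hPpdef, ← cfc_mul qp qp A hqpc.continuousOn hqpc.continuousOn]
    exact cfc_congr fun t ht => by
      have h2 := hJsq t ht
      simp only [hqpdef]
      nlinarith [h2]
  -- Loewner order facts
  have hBp0 : (0 : H →L[ℂ] H) ≤ Bp := by
    rw [ContinuousLinearMap.nonneg_iff_isPositive]
    refine ⟨hBp.isSymmetric, fun φ => ?_⟩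
    have := hBpPos φ
    simpa [ContinuousLinearMap.reApplyInnerSelf, inner_re_symm] using this
  have hBm0 : (0 : H →L[ℂ] H) ≤ Bm := by
    rw [ContinuousLinearMap.nonneg_iff_isPositive]
    refine ⟨hBm.isSymmetric, fun φ => ?_⟩
    have := hBmPos φ
    simpa [ContinuousLinearMap.reApplyInnerSelf, inner_re_symm] using this
  have hBpLe : Bp ≤ algebraMap ℝ (H →L[ℂ] H) ‖Bp‖ := hBp.le_algebraMap_norm_self
  have hBmLe : Bm ≤ algebraMap ℝ (H →L[ℂ] H) ‖Bm‖ := hBm.le_algebraMap_norm_self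
  have h1 : (0 : H →L[ℂ] H) ≤ Pp * Bp * Pp := by
    have := star_left_conjugate_le_conjugate hBp0 Pp
    simpa [hPpsa.star_eq] using this
  have h3 : (0 : H →L[ℂ] H) ≤ Pm * Bm * Pm := by
    have := star_left_conjugate_le_conjugate hBm0 Pm
    simpa [hPmsa.star_eq] using this
  have h2 : Pm * Bp * Pm ≤ ‖Bp‖ • Pm := by
    have h := star_left_conjugate_le_conjugate hBpLe Pm
    rw [hPmsa.star_eq] at h
    calc Pm * Bp * Pm ≤ Pm * algebraMap ℝ (H →L[ℂ] H) ‖Bp‖ * Pm := h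
      _ = ‖Bp‖ • (Pm * Pm) := by
          rw [Algebra.algebraMap_eq_smul_one]
          rw [mul_smul_comm, mul_one, smul_mul_assoc]
      _ = ‖Bp‖ • Pm := by rw [hPmPm]
  have h4 : Pp * Bm * Pp ≤ ‖Bm‖ • Pp := by
    have h := star_left_conjugate_le_conjugate hBmLe Pp
    rw [hPpsa.star_eq] at h
    calc Pp * Bm * Pp ≤ Pp * algebraMap ℝ (H →L[ℂ] H) ‖Bm‖ * Pp := h
      _ = ‖Bm‖ • (Pp * Pp) := by
          rw [Algebra.algebraMap_eq_smul_one]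
          rw [mul_smul_comm, mul_one, smul_mul_assoc]
      _ = ‖Bm‖ • Pp := by rw [hPpPp]
  -- cfc function computations
  set ξ : H →L[ℂ] H := algebraMap ℝ (H →L[ℂ] H) x with hξdef
  set f : ℝ → ℝ := fun t => J t * (t - x) with hfdef
  have hfc : Continuous f := hJcont.mul (continuous_id.sub continuous_const)
  have hidx : cfc (fun t : ℝ => t - x) A = A - ξ := by
    rw [cfc_sub (fun t : ℝ => t) (fun _ => x) A continuous_id.continuousOn
      continuousOn_const, cfc_id' ℝ A hA, cfc_const x A hA]
  have hcomm1 : cfc f A = U * (A - ξ) := by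
    rw [← hidx, hUdef, ← cfc_mul J (fun t => t - x) A hcJ
      (continuous_id.sub continuous_const).continuousOn]
  have hcomm2 : cfc f A = (A - ξ) * U := by
    rw [← hidx, hUdef, ← cfc_mul (fun t => t - x) J A
      (continuous_id.sub continuous_const).continuousOn hcJ]
    exact cfc_congr fun t _ => by simp only [hfdef]; ring
  set g : ℝ → ℝ := fun t => f t - ‖Bp‖ * qm t - ‖Bm‖ * qp t - δ with hgdef
  have hg0 : (0 : H →L[ℂ] H) ≤ cfc g A := by
    refine cfc_nonneg fun t ht => ?_
    rcases hspec t ht with h' | h'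
    · have hJ := hJa t h'
      have hd : δ ≤ x - a - ‖Bp‖ := min_le_left _ _
      show 0 ≤ f t - ‖Bp‖ * qm t - ‖Bm‖ * qp t - δ
      rw [hfdef]
      show 0 ≤ J t * (t - x) - ‖Bp‖ * ((1 - J t)/2) - ‖Bm‖ * ((1 + J t)/2) - δ
      rw [hJ]; linarith
    · have hJ := hJb t h'
      have hd : δ ≤ b - ‖Bm‖ - x := min_le_right _ _
      show 0 ≤ f t - ‖Bp‖ * qm t - ‖Bm‖ * qp t - δ
      rw [hfdef]
      show 0 ≤ J t * (t - x) - ‖Bp‖ * ((1 - J t)/2) - ‖Bm‖ * ((1 + J t)/2) - δ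
      rw [hJ]; linarith
  have hgsplit : cfc g A = cfc f A - ‖Bp‖ • Pm - ‖Bm‖ • Pp - algebraMap ℝ (H →L[ℂ] H) δ := by
    rw [hgdef, hPpdef, hPmdef]
    rw [cfc_sub (fun t => f t - ‖Bp‖ * qm t - ‖Bm‖ * qp t) (fun _ => δ) A
      (by exact ((hfc.sub (continuous_const.mul hqmc)).sub
        (continuous_const.mul hqpc)).continuousOn) continuousOn_const]
    rw [cfc_sub (fun t => f t - ‖Bp‖ * qm t) (fun t => ‖Bm‖ * qp t) A
      (by exact (hfc.sub (continuous_const.mul hqmc)).continuousOn)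
      (by exact (continuous_const.mul hqpc).continuousOn)]
    rw [cfc_sub f (fun t => ‖Bp‖ * qm t) A hfc.continuousOn
      (by exact (continuous_const.mul hqmc).continuousOn)]
    rw [cfc_const_mul ‖Bp‖ qm A hqmc.continuousOn, cfc_const_mul ‖Bm‖ qp A hqpc.continuousOn,
      cfc_const δ A hA]
  -- the main operator inequality
  set X : H →L[ℂ] H := A + B - ξ with hXdef
  set W : H →L[ℂ] H := cfc f A + Pp * B * Pp - Pm * B * Pm with hWdef
  have hδW : algebraMap ℝ (H →L[ℂ] H) δ ≤ W := by
    have hs : algebraMap ℝ (H →L[ℂ] H) δ ≤ cfc f A - ‖Bp‖ • Pm - ‖Bm‖ • Pp :=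
      sub_nonneg.mp (hgsplit ▸ hg0)
    refine le_trans hs ?_
    have w2 := neg_le_neg h2
    have w3 := neg_le_neg h4
    calc cfc f A - ‖Bp‖ • Pm - ‖Bm‖ • Pp
        = cfc f A + 0 + -(‖Bp‖ • Pm) + (-(‖Bm‖ • Pp) + 0) := by abel
      _ ≤ cfc f A + Pp*Bp*Pp + -(Pm*Bp*Pm) + (-(Pp*Bm*Pp) + Pm*Bm*Pm) :=
          add_le_add (add_le_add (add_le_add le_rfl h1) w2) (add_le_add w3 h3)
      _ = W := by rw [hWdef, hBdecomp]; noncomm_ring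
  have eB : U * B + B * U = Pp*B*Pp + Pp*B*Pp - (Pm*B*Pm + Pm*B*Pm) := by
    have e0 : U * B + B * U = U*B*(Pp+Pm) + (Pp+Pm)*(B*U) := by rw [hPsum]; simp
    rw [e0, hUPp]; noncomm_ring
  have e1 : U * X + X * U = W + W := by
    calc U*X + X*U = (U*(A-ξ) + (A-ξ)*U) + (U*B + B*U) := by rw [hXdef]; noncomm_ring
    _ = (cfc f A + cfc f A) + (Pp*B*Pp + Pp*B*Pp - (Pm*B*Pm + Pm*B*Pm)) := by
        rw [← hcomm1, ← hcomm2, eB]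
    _ = W + W := by rw [hWdef]; abel
  have key : algebraMap ℝ (H →L[ℂ] H) δ + algebraMap ℝ (H →L[ℂ] H) δ ≤ U * X + X * U := by
    rw [e1]; exact add_le_add hδW hδW
  -- self-adjointness of X
  have hXsa : IsSelfAdjoint X := by
    rw [hXdef, hξdef]
    exact (hA.add hB).sub (cfc_predicate_algebraMap (R := ℝ) x)
  have hXsym : ∀ u v : H, ⟪X u, v⟫_ℂ = ⟪u, X v⟫_ℂ := fun u v => by
    conv_lhs => rw [← hXsa.adjoint_eq]
    exact ContinuousLinearMap.adjoint_inner_left X v u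
  have hUsym : ∀ u v : H, ⟪U u, v⟫_ℂ = ⟪u, U v⟫_ℂ := fun u v => by
    conv_lhs => rw [← hUsa.adjoint_eq]
    exact ContinuousLinearMap.adjoint_inner_left U v u
  -- inner product estimate
  have hkey2 : ∀ φ : H, ‖φ‖^2 * δ ≤ ‖⟪(U * X) φ, φ⟫_ℂ‖ := by
    intro φ
    have hp : (0:H →L[ℂ] H) ≤ U * X + X * U
        - (algebraMap ℝ (H →L[ℂ] H) δ + algebraMap ℝ (H →L[ℂ] H) δ) := sub_nonneg.mpr key
    rw [ContinuousLinearMap.nonneg_iff_isPositive] at hp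
    have h5 := (RCLike.nonneg_iff.mp (hp.inner_nonneg_left φ)).1
    simp only [ContinuousLinearMap.sub_apply, ContinuousLinearMap.add_apply,
      ContinuousLinearMap.mul_apply, inner_sub_left, inner_add_left, map_sub, map_add] at h5
    have halg : RCLike.re ⟪(algebraMap ℝ (H →L[ℂ] H) δ) φ, φ⟫_ℂ = δ * ‖φ‖^2 := by
      rw [Algebra.algebraMap_eq_smul_one, ← algebraMap_smul ℂ δ (1 : H →L[ℂ] H),
        ContinuousLinearMap.coe_smul', Pi.smul_apply, ContinuousLinearMap.one_apply,
        inner_smul_left, RCLike.algebraMap_eq_ofReal, RCLike.conj_ofReal, RCLike.re_ofReal_mul,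
        inner_self_eq_norm_sq]
    have hXU : RCLike.re ⟪X (U φ), φ⟫_ℂ = RCLike.re ⟪U (X φ), φ⟫_ℂ := by
      rw [hXsym (U φ) φ, hUsym (X φ) φ]
      exact inner_re_symm _ _
    rw [hXU, halg] at h5
    have h6 : δ * ‖φ‖^2 ≤ RCLike.re ⟪U (X φ), φ⟫_ℂ := by linarith
    calc ‖φ‖^2 * δ = δ * ‖φ‖^2 := mul_comm _ _
      _ ≤ RCLike.re ⟪(U * X) φ, φ⟫_ℂ := by
          rw [ContinuousLinearMap.mul_apply]; exact h6
      _ ≤ ‖⟪(U * X) φ, φ⟫_ℂ‖ := RCLike.re_le_norm _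
  -- invertibility
  have hUXunit : IsUnit (U * X) :=
    ContinuousLinearMap.isUnit_of_forall_le_norm_inner_map (U * X)
      (c := ⟨δ, hδ.le⟩) (by exact_mod_cast hδ) hkey2
  have hUunit : IsUnit U := ⟨⟨U, U, hUU, hUU⟩, rfl⟩
  have hXunit : IsUnit X := by
    have h6 := hUunit.mul hUXunit
    rwa [← mul_assoc, hUU, one_mul] at h6
  rw [spectrum.notMem_iff]
  have hcoe : (algebraMap ℂ (H →L[ℂ] H)) (x : ℂ) = ξ := by
    rw [hξdef, IsScalarTower.algebraMap_apply ℝ ℂ (H →L[ℂ] H)]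
    norm_num
  rw [hcoe]
  have hneg : ξ - (A + B) = -X := by rw [hXdef]; abel
  rw [hneg]
  exact hXunit.neg
end

section
/- Let m < M be real numbers, let φ : [m, M] → ℝ be a function of bounded variation with φ(m) = 0, and let g : [m, M] → ℝ be continuous and of bounded variation. Then for any decomposition g = g₁ − g₂ on [m, M] with g₁, g₂ : [m, M] → ℝ monotone nondecreasing and continuous, the Riemann–Stieltjes integral of φ against g satisfies | ∫_{(m,M]} φ dμ₁ − ∫_{(m,M]} φ dμ₂ | ≤ 2 · Var_{[m,M]}(φ) · sup_{t ∈ [m,M]} |g(t)|, where μ₁ and μ₂ are the Lebesgue–Stieltjes measures associated with g₁ and g₂. -/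
/-!
Write `φ = p - q` with `p, q` monotone on `[m, M]` and `(p M - p m) + (q M - q m) = Var φ`; since
`φ m = 0`, also `φ = (p - p m) - (q - q m)`. For `F` monotone on `[m, M]`, the layer-cake formula
writes `∫_{(m,M]} (F - F m) dμᵢ` as the integral over `t ∈ (0, F M - F m]` of
`μᵢ {F - F m > t}`. Each such superlevel set lies between `(a, M]` and `[a, M]` for some `a`, and
`μᵢ` has no atoms in `(m, M]` because `gᵢ` is continuous; so the two measures of it differ by
`g M - g a`, which is at most `2 sup |g|` in absolute value.
-/

open MeasureTheory Set Filter Topology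

section LayerCake

variable {α : Type*} [MeasurableSpace α]

lemma integrableOn_Ioc_measureReal_lt (ν : Measure α) [IsFiniteMeasure ν] (f : α → ℝ) (K : ℝ) :
    IntegrableOn (fun t ↦ ν.real {x | t < f x}) (Ioc 0 K) := by
  have hanti : Antitone fun t ↦ ν.real {x | t < f x} :=
    fun s t hst ↦ measureReal_mono fun x hx ↦ hst.trans_lt hx
  exact ((hanti.antitoneOn _).integrableOn_isCompact isCompact_Icc).mono_set Ioc_subset_Icc_self

lemma integral_eq_setIntegral_Ioc_measureReal_lt {ν : Measure α} [IsFiniteMeasure ν]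
    {f : α → ℝ} {K : ℝ} (hf : AEStronglyMeasurable f ν) (hfK : ∀ᵐ x ∂ν, f x ∈ Icc 0 K) :
    ∫ x, f x ∂ν = ∫ t in Ioc 0 K, ν.real {x | t < f x} := by
  have hint : Integrable f ν := .of_bound hf K <| by
    filter_upwards [hfK] with x hx
    rw [Real.norm_eq_abs, abs_of_nonneg hx.1]
    exact hx.2
  rw [hint.integral_eq_integral_meas_lt (by filter_upwards [hfK] with x hx using hx.1)]
  refine setIntegral_eq_of_subset_of_forall_sdiff_eq_zero measurableSet_Ioi Ioc_subset_Ioi_self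
    fun t ht ↦ ?_
  have hKt : K < t := not_le.1 fun h ↦ ht.2 ⟨ht.1, h⟩
  have hnull : ν {x | t < f x} = 0 :=
    measure_mono_null (fun x hx ↦ (hx : t < f x).not_ge) (ae_iff.1 (by
      filter_upwards [hfK] with x hx using hx.2.trans hKt.le))
  simp [measureReal_def, hnull]

theorem abs_integral_sub_integral_le_of_abs_measureReal_lt_sub_le {ν₁ ν₂ : Measure α}
    [IsFiniteMeasure ν₁] [IsFiniteMeasure ν₂] {f : α → ℝ} {K B : ℝ} (hK : 0 ≤ K)
    (hf₁ : AEStronglyMeasurable f ν₁) (hf₂ : AEStronglyMeasurable f ν₂)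
    (hfK₁ : ∀ᵐ x ∂ν₁, f x ∈ Icc 0 K) (hfK₂ : ∀ᵐ x ∂ν₂, f x ∈ Icc 0 K)
    (hB : ∀ t ∈ Ioc 0 K, |ν₁.real {x | t < f x} - ν₂.real {x | t < f x}| ≤ B) :
    |∫ x, f x ∂ν₁ - ∫ x, f x ∂ν₂| ≤ B * K := by
  rw [integral_eq_setIntegral_Ioc_measureReal_lt hf₁ hfK₁,
    integral_eq_setIntegral_Ioc_measureReal_lt hf₂ hfK₂, ← integral_sub
    (integrableOn_Ioc_measureReal_lt ν₁ f K) (integrableOn_Ioc_measureReal_lt ν₂ f K)]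
  simpa [Real.volume_real_Ioc_of_le hK] using
    norm_setIntegral_le_of_norm_le_const (μ := volume)
      (f := fun t ↦ ν₁.real {x | t < f x} - ν₂.real {x | t < f x}) measure_Ioc_lt_top hB

end LayerCake

lemma exists_Ioc_subset_subset_Icc_of_upwardClosed {m M : ℝ} (hmM : m ≤ M) {T : Set ℝ}
    (hT : T ⊆ Ioc m M) (hup : ∀ x ∈ T, ∀ y ∈ Ioc m M, x ≤ y → y ∈ T) :
    ∃ a ∈ Icc m M, Ioc a M ⊆ T ∧ T ⊆ Icc a M := by
  have hbdd : BddBelow (insert M T) := ⟨m, by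
    rintro x (rfl | hx)
    exacts [hmM, (hT hx).1.le]⟩
  -- taking the infimum of `insert M T` rather than of `T` covers the case `T = ∅`
  refine ⟨sInf (insert M T), ⟨le_csInf (insert_nonempty _ _) ?_, csInf_le hbdd (mem_insert _ _)⟩,
    fun x hx ↦ ?_, fun x hx ↦ ⟨csInf_le hbdd (mem_insert_of_mem _ hx), (hT hx).2⟩⟩
  · rintro x (rfl | hx)
    exacts [hmM, (hT hx).1.le]
  · obtain ⟨y, rfl | hy, hyx⟩ := (csInf_lt_iff hbdd (insert_nonempty _ _)).1 hx.1
    · exact absurd hx.2 hyx.not_ge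
    · exact hup y hy x ⟨(hT hy).1.trans hyx, hx.2⟩ hyx.le

def IsStieltjesMeasureOn (μ : Measure ℝ) (G : ℝ → ℝ) (m M : ℝ) : Prop :=
  ∀ s t : ℝ, m ≤ s → s ≤ t → t ≤ M → μ (Ioc s t) = ENNReal.ofReal (G t - G s)

namespace IsStieltjesMeasureOn

variable {μ : Measure ℝ} {G : ℝ → ℝ} {m M : ℝ}

lemma isFiniteMeasure_restrict (hμ : IsStieltjesMeasureOn μ G m M) (hmM : m ≤ M) :
    IsFiniteMeasure (μ.restrict (Ioc m M)) :=
  ⟨by simp [hμ m M le_rfl hmM le_rfl]⟩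

lemma measure_singleton (hμ : IsStieltjesMeasureOn μ G m M) (hG : ContinuousOn G (Icc m M))
    {t : ℝ} (ht : t ∈ Ioc m M) : μ {t} = 0 := by
  have hGt : Tendsto G (𝓝[Ico m t] t) (𝓝 (G t)) :=
    ((hG t (Ioc_subset_Icc_self ht)).mono fun s hs ↦ ⟨hs.1, hs.2.le.trans ht.2⟩).tendsto
  have hlim : Tendsto (fun s ↦ ENNReal.ofReal (G t - G s)) (𝓝[Ico m t] t) (𝓝 0) := by
    simpa using ENNReal.tendsto_ofReal ((tendsto_const_nhds (x := G t)).sub hGt)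
  have := right_nhdsWithin_Ico_neBot ht.1
  refine le_antisymm (ge_of_tendsto hlim ?_) zero_le
  filter_upwards [self_mem_nhdsWithin] with s hs
  calc μ {t} ≤ μ (Ioc s t) := measure_mono (singleton_subset_iff.2 ⟨hs.2, le_rfl⟩)
    _ = ENNReal.ofReal (G t - G s) := hμ s t hs.1 hs.2.le ht.2

lemma measureReal_eq_of_Ioc_subset_of_subset_Icc (hμ : IsStieltjesMeasureOn μ G m M)
    (hGmono : MonotoneOn G (Icc m M)) (hG : ContinuousOn G (Icc m M)) {a : ℝ} {T : Set ℝ}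
    (ha : a ∈ Icc m M) (hIoc : Ioc a M ⊆ T) (hIcc : T ⊆ Icc a M) (hT : T ⊆ Ioc m M) :
    μ.real T = G M - G a := by
  have hnull : μ ((Icc a M ∩ Ioc m M) \ Ioc a M) = 0 := by
    refine measure_mono_null (t := {a} ∩ Ioc m M) ?_ ?_
    · rintro x ⟨⟨⟨hax, hxM⟩, hx⟩, hx'⟩
      exact ⟨(eq_of_le_of_not_lt hax fun h ↦ hx' ⟨h, hxM⟩).symm, hx⟩
    · rcases ha.1.eq_or_lt with rfl | hma
      · simp
      · exact measure_mono_null inter_subset_left (hμ.measure_singleton hG ⟨hma, ha.2⟩)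
  rw [measureReal_def, ← measure_eq_measure_smaller_of_between_null_sdiff hIoc
    (subset_inter hIcc hT) hnull, hμ a M ha.1 ha.2 le_rfl,
    ENNReal.toReal_ofReal (sub_nonneg.2 (hGmono ha ⟨ha.1.trans ha.2, le_rfl⟩ ha.2))]

end IsStieltjesMeasureOn

lemma MonotoneOn.sub_apply_left_mem_Icc {m M : ℝ} {F : ℝ → ℝ} (hF : MonotoneOn F (Icc m M))
    {x : ℝ} (hx : x ∈ Icc m M) : F x - F m ∈ Icc 0 (F M - F m) := by
  have hm : m ∈ Icc m M := ⟨le_rfl, hx.1.trans hx.2⟩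
  have hM : M ∈ Icc m M := ⟨hx.1.trans hx.2, le_rfl⟩
  exact ⟨sub_nonneg.2 (hF hm hx hx.1), sub_le_sub_right (hF hx hM hx.2) _⟩

lemma MonotoneOn.integrableOn_Ioc_sub_apply_left {m M : ℝ} {F : ℝ → ℝ} {μ : Measure ℝ}
    [IsFiniteMeasure (μ.restrict (Ioc m M))] (hF : MonotoneOn F (Icc m M)) :
    IntegrableOn (fun x ↦ F x - F m) (Ioc m M) μ := by
  have hmeas := (aemeasurable_restrict_of_monotoneOn (μ := μ) measurableSet_Ioc
    (hF.mono Ioc_subset_Icc_self)).sub_const (F m)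
  refine Integrable.of_bound hmeas.aestronglyMeasurable (F M - F m)
    (ae_restrict_of_forall_mem measurableSet_Ioc fun x hx ↦ ?_)
  have hFx := hF.sub_apply_left_mem_Icc (Ioc_subset_Icc_self hx)
  rw [Real.norm_eq_abs, abs_of_nonneg hFx.1]
  exact hFx.2

theorem abs_setIntegral_sub_setIntegral_le_of_monotoneOn {μ₁ μ₂ : Measure ℝ} {G₁ G₂ F : ℝ → ℝ}
    {m M B : ℝ} (hmM : m ≤ M)
    (hμ₁ : IsStieltjesMeasureOn μ₁ G₁ m M) (hμ₂ : IsStieltjesMeasureOn μ₂ G₂ m M)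
    (hG₁mono : MonotoneOn G₁ (Icc m M)) (hG₂mono : MonotoneOn G₂ (Icc m M))
    (hG₁ : ContinuousOn G₁ (Icc m M)) (hG₂ : ContinuousOn G₂ (Icc m M))
    (hB : ∀ a ∈ Icc m M, |(G₁ M - G₁ a) - (G₂ M - G₂ a)| ≤ B) (hF : MonotoneOn F (Icc m M)) :
    |(∫ x in Ioc m M, (F x - F m) ∂μ₁) - ∫ x in Ioc m M, (F x - F m) ∂μ₂| ≤ B * (F M - F m) := by
  have := hμ₁.isFiniteMeasure_restrict hmM
  have := hμ₂.isFiniteMeasure_restrict hmM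
  have hbounds : ∀ μ : Measure ℝ, ∀ᵐ x ∂μ.restrict (Ioc m M), F x - F m ∈ Icc 0 (F M - F m) :=
    fun μ ↦ ae_restrict_of_forall_mem measurableSet_Ioc fun x hx ↦
      hF.sub_apply_left_mem_Icc (Ioc_subset_Icc_self hx)
  refine abs_integral_sub_integral_le_of_abs_measureReal_lt_sub_le
    (hF.sub_apply_left_mem_Icc ⟨hmM, le_rfl⟩).1
    hF.integrableOn_Ioc_sub_apply_left.aestronglyMeasurable
    hF.integrableOn_Ioc_sub_apply_left.aestronglyMeasurable (hbounds μ₁) (hbounds μ₂) fun t _ ↦ ?_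
  obtain ⟨a, ha, hIoc, hIcc⟩ := exists_Ioc_subset_subset_Icc_of_upwardClosed hmM
    (T := {x | t < F x - F m} ∩ Ioc m M) inter_subset_right fun x hx y hy hxy ↦
      ⟨hx.1.trans_le <| sub_le_sub_right
        (hF (Ioc_subset_Icc_self hx.2) (Ioc_subset_Icc_self hy) hxy) _, hy⟩
  rw [measureReal_restrict_apply' measurableSet_Ioc, measureReal_restrict_apply' measurableSet_Ioc,
    hμ₁.measureReal_eq_of_Ioc_subset_of_subset_Icc hG₁mono hG₁ ha hIoc hIcc inter_subset_right,
    hμ₂.measureReal_eq_of_Ioc_subset_of_subset_Icc hG₂mono hG₂ ha hIoc hIcc inter_subset_right]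
  exact hB a ha

lemma abs_sub_le_two_mul_iSup_abs {m M : ℝ} {g : ℝ → ℝ} (hg : ContinuousOn g (Icc m M)) {a b : ℝ}
    (ha : a ∈ Icc m M) (hb : b ∈ Icc m M) : |g b - g a| ≤ 2 * ⨆ t : Icc m M, |g t| := by
  have hbdd : BddAbove (range fun t : Icc m M ↦ |g t|) := by
    simpa only [image_eq_range] using isCompact_Icc.bddAbove_image hg.abs
  linarith [abs_sub (g b) (g a), le_ciSup hbdd ⟨a, ha⟩, le_ciSup hbdd ⟨b, hb⟩]

theorem stieltjes_integral_BV_bound_general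
    (m M : ℝ) (hmM : m < M)
    (φ g g₁ g₂ : ℝ → ℝ)
    (hφBV : BoundedVariationOn φ (Set.Icc m M))
    (hφm : φ m = 0)
    (hgcont : ContinuousOn g (Set.Icc m M))
    (hg₁mono : MonotoneOn g₁ (Set.Icc m M))
    (hg₂mono : MonotoneOn g₂ (Set.Icc m M))
    (hg₁cont : ContinuousOn g₁ (Set.Icc m M))
    (hg₂cont : ContinuousOn g₂ (Set.Icc m M))
    (hdecomp : ∀ t ∈ Set.Icc m M, g t = g₁ t - g₂ t)
    (μ₁ μ₂ : Measure ℝ)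
    (hμ₁ : ∀ s t : ℝ, m ≤ s → s ≤ t → t ≤ M →
      μ₁ (Set.Ioc s t) = ENNReal.ofReal (g₁ t - g₁ s))
    (hμ₂ : ∀ s t : ℝ, m ≤ s → s ≤ t → t ≤ M →
      μ₂ (Set.Ioc s t) = ENNReal.ofReal (g₂ t - g₂ s)) :
    |(∫ x in Set.Ioc m M, φ x ∂μ₁) - ∫ x in Set.Ioc m M, φ x ∂μ₂|
      ≤ 2 * (eVariationOn φ (Set.Icc m M)).toReal * ⨆ t : Set.Icc m M, |g t| := by
  have hmS : m ∈ Icc m M := ⟨le_rfl, hmM.le⟩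
  have hMS : M ∈ Icc m M := ⟨hmM.le, le_rfl⟩
  have hB : ∀ a ∈ Icc m M, |(g₁ M - g₁ a) - (g₂ M - g₂ a)| ≤ 2 * ⨆ t : Icc m M, |g t| :=
    fun a ha ↦ by
      simpa only [hdecomp M hMS, hdecomp a ha, sub_sub_sub_comm]
        using abs_sub_le_two_mul_iSup_abs hgcont ha hMS
  obtain ⟨p, q, hp, hq, hφpq, hvar⟩ :=
    hφBV.locallyBoundedVariationOn.exists_monotoneOn_sub_monotoneOn'
  have hφ : φ = fun x ↦ (p x - p m) - (q x - q m) := by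
    funext x
    have hx : φ x = p x - q x := congrFun hφpq x
    have hm : φ m = p m - q m := congrFun hφpq m
    linarith
  have hsplit (μ : Measure ℝ) [IsFiniteMeasure (μ.restrict (Ioc m M))] :
      ∫ x in Ioc m M, φ x ∂μ =
        (∫ x in Ioc m M, (p x - p m) ∂μ) - ∫ x in Ioc m M, (q x - q m) ∂μ := by
    rw [hφ, integral_sub hp.integrableOn_Ioc_sub_apply_left hq.integrableOn_Ioc_sub_apply_left]
  have := IsStieltjesMeasureOn.isFiniteMeasure_restrict hμ₁ hmM.le
  have := IsStieltjesMeasureOn.isFiniteMeasure_restrict hμ₂ hmM.le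
  have hP := abs_setIntegral_sub_setIntegral_le_of_monotoneOn hmM.le hμ₁ hμ₂ hg₁mono hg₂mono
    hg₁cont hg₂cont hB hp
  have hQ := abs_setIntegral_sub_setIntegral_le_of_monotoneOn hmM.le hμ₁ hμ₂ hg₁mono hg₂mono
    hg₁cont hg₂cont hB hq
  have hV : (p M - p m) + (q M - q m) = (eVariationOn φ (Icc m M)).toReal := by
    rw [hvar m hmS M hMS, variationOnFromTo.eq_of_le _ _ hmM.le, inter_self]
  rw [hsplit μ₁, hsplit μ₂, sub_sub_sub_comm]
  calc _ ≤ _ := (abs_sub _ _).trans (add_le_add hP hQ)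
    _ = _ := by rw [← hV]; ring

theorem stieltjes_integral_BV_bound
    (m M : ℝ) (hmM : m < M)
    (φ g g₁ g₂ : ℝ → ℝ)
    (hφBV : BoundedVariationOn φ (Set.Icc m M))
    (hφm : φ m = 0)
    (hgcont : ContinuousOn g (Set.Icc m M))
    (hgBV : BoundedVariationOn g (Set.Icc m M))
    (hg₁mono : MonotoneOn g₁ (Set.Icc m M))
    (hg₂mono : MonotoneOn g₂ (Set.Icc m M))
    (hg₁cont : ContinuousOn g₁ (Set.Icc m M))
    (hg₂cont : ContinuousOn g₂ (Set.Icc m M))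
    (hdecomp : ∀ t ∈ Set.Icc m M, g t = g₁ t - g₂ t)
    (μ₁ μ₂ : Measure ℝ)
    (hμ₁ : ∀ s t : ℝ, m ≤ s → s ≤ t → t ≤ M →
      μ₁ (Set.Ioc s t) = ENNReal.ofReal (g₁ t - g₁ s))
    (hμ₂ : ∀ s t : ℝ, m ≤ s → s ≤ t → t ≤ M →
      μ₂ (Set.Ioc s t) = ENNReal.ofReal (g₂ t - g₂ s)) :
    |(∫ x in Set.Ioc m M, φ x ∂μ₁) - ∫ x in Set.Ioc m M, φ x ∂μ₂|
      ≤ 2 * (eVariationOn φ (Set.Icc m M)).toReal * ⨆ t : Set.Icc m M, |g t| :=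
  stieltjes_integral_BV_bound_general m M hmM φ g g₁ g₂ hφBV hφm hgcont hg₁mono hg₂mono hg₁cont
    hg₂cont hdecomp μ₁ μ₂ hμ₁ hμ₂
end

section
/- Let A₁, A₂ and C be bounded operators on a complex Hilbert space. If A₁ and A₂ are self-adjoint and nonnegative and satisfy A₂² ≥ A₁² ≥ 0 (i.e. A₂² − A₁² is a nonnegative operator), then ‖A₁ C A₁‖ ≤ ‖A₂ C A₂‖. -/
/-!
If `b` is an invertible self-adjoint element with `s * s ≤ b * b`, then `v = s b⁻¹` is a
contraction, since `v⋆ v = b⁻¹ (s s) b⁻¹ ≤ b⁻¹ (b b) b⁻¹ = 1`; and `s = v b = b v⋆`, so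
`s c s = v (b c b) v⋆` has norm at most `‖b c b‖`. For a general `a₂ ≥ 0` apply this to the
invertible `b = a₂ + ε`, which satisfies `a₁ a₁ ≤ a₂ a₂ ≤ b b`, and let `ε → 0`.
-/

open scoped InnerProductSpace
open Filter Topology

lemma norm_mul_mul_star_le_of_norm_le_one {A : Type*} [NonUnitalNormedRing A] [StarRing A]
    [NormedStarGroup A] {v : A} (hv : ‖v‖ ≤ 1) (x : A) : ‖v * x * star v‖ ≤ ‖x‖ :=
  calc ‖v * x * star v‖ ≤ ‖v‖ * ‖x‖ * ‖star v‖ := norm_mul₃_le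
    _ ≤ 1 * ‖x‖ * 1 := by gcongr; rwa [norm_star]
    _ = ‖x‖ := by ring

section CStarAlgebra

variable {A : Type*} [CStarAlgebra A] [PartialOrder A] [StarOrderedRing A]

lemma norm_mul_inv_le_one_of_star_mul_self_le {s : A} {u : Aˣ}
    (h : star s * s ≤ star (u : A) * u) : ‖s * ↑u⁻¹‖ ≤ 1 := by
  have key : star (s * ↑u⁻¹) * (s * ↑u⁻¹) ≤ 1 :=
    calc star (s * ↑u⁻¹) * (s * ↑u⁻¹) = star (↑u⁻¹ : A) * (star s * s) * ↑u⁻¹ := by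
          simp only [star_mul, mul_assoc]
      _ ≤ star (↑u⁻¹ : A) * (star (u : A) * u) * ↑u⁻¹ := star_left_conjugate_le_conjugate h _
      _ = 1 := by simp [← mul_assoc, ← star_mul]
  rw [← CStarAlgebra.norm_le_one_iff_of_nonneg _ (star_mul_self_nonneg _),
    CStarRing.norm_star_mul_self, ← sq] at key
  exact (sq_le_one_iff₀ (norm_nonneg _)).1 key

lemma norm_mul_mul_le_of_mul_self_le_unit {s : A} {u : Aˣ} (hs : IsSelfAdjoint s)
    (hu : IsSelfAdjoint (u : A)) (h : s * s ≤ u * u) (c : A) :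
    ‖s * c * s‖ ≤ ‖(u : A) * c * u‖ := by
  obtain ⟨v, hv_def⟩ : ∃ v, v = s * ↑u⁻¹ := ⟨_, rfl⟩
  have hv : ‖v‖ ≤ 1 :=
    hv_def ▸ norm_mul_inv_le_one_of_star_mul_self_le (by rwa [hs.star_eq, hu.star_eq])
  have h_left : s = v * u := by rw [hv_def, mul_assoc, Units.inv_mul, mul_one]
  have h_right : s = u * star v := by rw [← hu.star_eq, ← star_mul, ← h_left, hs.star_eq]
  calc ‖s * c * s‖ = ‖v * u * c * (u * star v)‖ := by rw [← h_left, ← h_right]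
    _ = ‖v * (u * c * u) * star v‖ := by simp only [mul_assoc]
    _ ≤ ‖(u : A) * c * u‖ := norm_mul_mul_star_le_of_norm_le_one hv _

lemma mul_self_le_mul_self_add_algebraMap {a : A} (ha : 0 ≤ a) {ε : ℝ} (hε : 0 ≤ ε) :
    a * a ≤ (a + algebraMap ℝ A ε) * (a + algebraMap ℝ A ε) := by
  have h_expand : (a + algebraMap ℝ A ε) * (a + algebraMap ℝ A ε)
      = a * a + ε • (a + a + algebraMap ℝ A ε) := by
    simp only [add_mul, mul_add, Algebra.smul_def, Algebra.commutes ε a]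
    abel
  rw [h_expand]
  exact le_add_of_nonneg_right (smul_nonneg hε (add_nonneg (add_nonneg ha ha)
    (algebraMap_nonneg A hε)))

theorem norm_mul_mul_le_of_mul_self_le {a₁ a₂ : A} (h₁ : IsSelfAdjoint a₁) (h₂ : 0 ≤ a₂)
    (h : a₁ * a₁ ≤ a₂ * a₂) (c : A) : ‖a₁ * c * a₁‖ ≤ ‖a₂ * c * a₂‖ := by
  set b : ℝ → A := fun ε => a₂ + algebraMap ℝ A ε
  have hb : Tendsto (fun ε => ‖b ε * c * b ε‖) (𝓝[>] 0) (𝓝 ‖a₂ * c * a₂‖) := by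
    have : Continuous (fun ε => ‖b ε * c * b ε‖) := by fun_prop
    simpa [b] using (this.tendsto 0).mono_left nhdsWithin_le_nhds
  refine ge_of_tendsto hb (eventually_nhdsWithin_of_forall fun ε (hε : 0 < ε) => ?_)
  have hb_pos : IsStrictlyPositive (b ε) :=
    IsStrictlyPositive.nonneg_add h₂ (isStrictlyPositive_algebraMap hε)
  lift b ε to Aˣ using hb_pos.isUnit with u hu
  exact norm_mul_mul_le_of_mul_self_le_unit h₁ (hu ▸ hb_pos.isSelfAdjoint)
    (h.trans (hu ▸ mul_self_le_mul_self_add_algebraMap h₂ hε.le)) c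

end CStarAlgebra

lemma ContinuousLinearMap.le_of_re_inner_le {𝕜 E : Type*} [RCLike 𝕜] [NormedAddCommGroup E]
    [InnerProductSpace 𝕜 E] [CompleteSpace E] {S T : E →L[𝕜] E} (hS : IsSelfAdjoint S)
    (hT : IsSelfAdjoint T) (h : ∀ x, RCLike.re ⟪x, S x⟫_𝕜 ≤ RCLike.re ⟪x, T x⟫_𝕜) : S ≤ T := by
  rw [le_def, isPositive_def']
  refine ⟨hT.sub hS, fun x => ?_⟩
  rw [reApplyInnerSelf_apply, inner_re_symm]
  simpa [inner_sub_right] using h x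

theorem sandwich_norm_inequality_general
    {H : Type*} [NormedAddCommGroup H] [InnerProductSpace ℂ H] [CompleteSpace H]
    (A₁ A₂ C : H →L[ℂ] H)
    (hA₁ : IsSelfAdjoint A₁) (hA₂ : IsSelfAdjoint A₂)
    (hA₂pos : ∀ x : H, 0 ≤ (⟪x, A₂ x⟫_ℂ).re)
    (hsq : ∀ x : H, (⟪x, A₁ (A₁ x)⟫_ℂ).re ≤ (⟪x, A₂ (A₂ x)⟫_ℂ).re) :
    ‖A₁.comp (C.comp A₁)‖ ≤ ‖A₂.comp (C.comp A₂)‖ := by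
  have hA₂_nonneg : 0 ≤ A₂ :=
    ContinuousLinearMap.le_of_re_inner_le (.zero _) hA₂ (by simpa using hA₂pos)
  have hsq_le : A₁ * A₁ ≤ A₂ * A₂ :=
    ContinuousLinearMap.le_of_re_inner_le (by simpa [sq] using hA₁.pow 2)
      (by simpa [sq] using hA₂.pow 2) (by simpa using hsq)
  exact norm_mul_mul_le_of_mul_self_le hA₁ hA₂_nonneg hsq_le C

theorem sandwich_norm_inequality
    {H : Type*} [NormedAddCommGroup H] [InnerProductSpace ℂ H] [CompleteSpace H]
    (A₁ A₂ C : H →L[ℂ] H)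
    (hA₁ : IsSelfAdjoint A₁) (hA₂ : IsSelfAdjoint A₂)
    (hA₁pos : ∀ x : H, 0 ≤ (⟪x, A₁ x⟫_ℂ).re)
    (hA₂pos : ∀ x : H, 0 ≤ (⟪x, A₂ x⟫_ℂ).re)
    (hsq : ∀ x : H, (⟪x, A₁ (A₁ x)⟫_ℂ).re ≤ (⟪x, A₂ (A₂ x)⟫_ℂ).re) :
    ‖A₁.comp (C.comp A₁)‖ ≤ ‖A₂.comp (C.comp A₂)‖ :=
  sandwich_norm_inequality_general A₁ A₂ C hA₁ hA₂ hA₂pos hsq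
end

section
/- Let H₀ and V be bounded self-adjoint operators on a complex Hilbert space with V ≥ 0, let V^{1/2} be the nonnegative square root of V, let t₁ < t₂ be real numbers, and set H(s) = H₀ + sV. Let z ∈ ℂ with Im z > 0 be such that (t₂ − t₁) · ‖V (H(t₁) − z)⁻¹‖ < 1. Then the Bochner integral of the sandwiched resolvent admits the norm-convergent series representation ∫_{t₁}^{t₂} V^{1/2} (H(s) − z)⁻¹ V^{1/2} ds = Σ_{k=1}^∞ ((−1)^{k+1} / k) · (t₂ − t₁)^k · ( V^{1/2} (H(t₁) − z)⁻¹ V^{1/2} )^k. -/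
set_option maxHeartbeats 1000000

open scoped InnerProductSpace
open MeasureTheory

theorem averaged_resolvent_log_series
    {H : Type*} [NormedAddCommGroup H] [InnerProductSpace ℂ H] [CompleteSpace H]
    (H₀ V sqrtV : H →L[ℂ] H)
    (hH₀ : IsSelfAdjoint H₀) (hV : IsSelfAdjoint V)
    (hVpos : ∀ x : H, 0 ≤ (⟪x, V x⟫_ℂ).re)
    (hsqrtV : IsSelfAdjoint sqrtV)
    (hsqrtVpos : ∀ x : H, 0 ≤ (⟪x, sqrtV x⟫_ℂ).re)
    (hsqrtVsq : sqrtV.comp sqrtV = V)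
    (t₁ t₂ : ℝ) (ht : t₁ < t₂)
    (z : ℂ) (hz : 0 < z.im)
    (hsmall : (t₂ - t₁) *
      ‖V.comp (Ring.inverse (H₀ + (t₁ : ℂ) • V - z • (1 : H →L[ℂ] H)))‖ < 1) :
    HasSum
      (fun n : ℕ =>
        (((-1 : ℂ) ^ n / (n + 1)) * ((t₂ : ℂ) - (t₁ : ℂ)) ^ (n + 1)) •
          (sqrtV.comp ((Ring.inverse (H₀ + (t₁ : ℂ) • V - z • (1 : H →L[ℂ] H))).comp sqrtV))
            ^ (n + 1))
      (∫ s in t₁..t₂,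
        sqrtV.comp ((Ring.inverse (H₀ + (s : ℂ) • V - z • (1 : H →L[ℂ] H))).comp sqrtV)) := by
  classical
  set A : ℝ → (H →L[ℂ] H) := fun s => H₀ + (s : ℂ) • V - z • (1 : H →L[ℂ] H) with hA
  -- self-adjointness of H₀ + s V
  have hAsa : ∀ s : ℝ, IsSelfAdjoint (H₀ + (s : ℂ) • V) := by
    intro s
    have hsV : IsSelfAdjoint ((s : ℂ) • V) := by
      rw [isSelfAdjoint_iff, star_smul, hV.star_eq, Complex.star_def, Complex.conj_ofReal]
    exact hH₀.add hsV
  -- invertibility of A s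
  have hUnit : ∀ s : ℝ, IsUnit (A s) := by
    intro s
    have hzs : z ∉ spectrum ℂ (H₀ + (s : ℂ) • V) := by
      intro hmem
      have h1 := (hAsa s).mem_spectrum_eq_re hmem
      have him : z.im = 0 := by rw [h1]; simp
      exact absurd him (ne_of_gt hz)
    have h2 := spectrum.notMem_iff.mp hzs
    rw [Algebra.algebraMap_eq_smul_one] at h2
    have h3 : IsUnit (-(z • (1 : H →L[ℂ] H) - (H₀ + (s : ℂ) • V))) := h2.neg
    rw [neg_sub] at h3
    exact h3
  set R₁ : H →L[ℂ] H := Ring.inverse (A t₁) with hR₁def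
  have hR₁l : R₁ * A t₁ = 1 := Ring.inverse_mul_cancel _ (hUnit t₁)
  set B : H →L[ℂ] H := V * R₁ with hBdef
  have hsmall' : (t₂ - t₁) * ‖B‖ < 1 := by
    simpa [hBdef, ContinuousLinearMap.mul_def] using hsmall
  have hBnn : 0 ≤ ‖B‖ := norm_nonneg _
  set T : H →L[ℂ] H := sqrtV * R₁ * sqrtV with hTdef
  have hVmul : sqrtV * sqrtV = V := hsqrtVsq
  have hstep : (sqrtV * R₁) * B = T * (sqrtV * R₁) := by
    rw [hBdef, ← hVmul, hTdef]
    simp only [mul_assoc]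
  have hkey : ∀ n : ℕ, (sqrtV * R₁) * B ^ n * sqrtV = T ^ (n + 1) := by
    intro n
    induction n with
    | zero => simp [hTdef]
    | succ n ih =>
      have h1 : sqrtV * R₁ * (B * B ^ n) = T * (sqrtV * R₁ * B ^ n) := by
        rw [← mul_assoc, hstep, mul_assoc]
      rw [pow_succ', h1, mul_assoc, ih, ← pow_succ']
  -- pointwise expansion of the sandwiched resolvent
  set F : ℕ → ℝ → (H →L[ℂ] H) :=
    fun n s => (((t₁ - s : ℝ) : ℂ) ^ n) • T ^ (n + 1) with hF
  have hsumpt : ∀ s ∈ Set.Ioc t₁ t₂,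
      HasSum (fun n => F n s) (sqrtV.comp ((Ring.inverse (A s)).comp sqrtV)) := by
    intro s hs
    set x : H →L[ℂ] H := ((t₁ - s : ℝ) : ℂ) • B with hx
    have hxnorm : ‖x‖ < 1 := by
      rw [hx, norm_smul, Complex.norm_real, Real.norm_eq_abs, abs_of_nonpos (by linarith [hs.1])]
      calc (-(t₁ - s)) * ‖B‖ ≤ (t₂ - t₁) * ‖B‖ := by nlinarith [hs.2]
        _ < 1 := hsmall'
    have hgeo := hasSum_geom_series_inverse x hxnorm
    have hAs : A s = (1 - x) * A t₁ := by
      rw [sub_mul, one_mul, hx, smul_mul_assoc, hBdef, mul_assoc, hR₁l, mul_one, hA]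
      push_cast
      module
    have hinv : Ring.inverse (A s) = R₁ * Ring.inverse (1 - x) := by
      obtain ⟨u, hu⟩ := isUnit_one_sub_of_norm_lt_one hxnorm
      obtain ⟨w, hw⟩ := hUnit t₁
      rw [hR₁def, hAs, ← hu, ← hw, ← Units.val_mul, Ring.inverse_unit, mul_inv_rev,
        Units.val_mul, ← Ring.inverse_unit, ← Ring.inverse_unit, hu, hw]
    have h2 := (hgeo.mul_left (sqrtV * R₁)).mul_right sqrtV
    have hfun : ∀ n : ℕ, (sqrtV * R₁) * x ^ n * sqrtV = F n s := by
      intro n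
      rw [hF, hx, smul_pow, mul_smul_comm, smul_mul_assoc, hkey n]
    simp only [hfun] at h2
    show HasSum (fun n => F n s) (sqrtV * (Ring.inverse (A s) * sqrtV))
    rw [hinv, ← mul_assoc, ← mul_assoc]
    exact h2
  -- integrability and summability
  have hFcont : ∀ n, Continuous (F n) := by
    intro n
    exact ((Complex.continuous_ofReal.comp (continuous_const.sub continuous_id)).pow n).smul
      continuous_const
  have hFint : ∀ n, Integrable (F n) (volume.restrict (Set.Ioc t₁ t₂)) := by
    intro n
    exact (hFcont n).integrableOn_Ioc
  set c : ℝ := t₂ - t₁ with hc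
  have hc0 : 0 < c := by rw [hc]; linarith
  set C : ℝ := ‖sqrtV‖ * ‖R₁‖ * ‖sqrtV‖ with hC
  have hTn : ∀ n : ℕ, ‖T ^ (n + 1)‖ ≤ C * ‖B‖ ^ n := by
    intro n
    rw [← hkey n]
    calc ‖(sqrtV * R₁) * B ^ n * sqrtV‖ ≤ ‖(sqrtV * R₁) * B ^ n‖ * ‖sqrtV‖ := norm_mul_le _ _
      _ ≤ (‖sqrtV * R₁‖ * ‖B ^ n‖) * ‖sqrtV‖ := by gcongr; exact norm_mul_le _ _
      _ ≤ ((‖sqrtV‖ * ‖R₁‖) * ‖B‖ ^ n) * ‖sqrtV‖ := by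
          gcongr
          · exact norm_mul_le _ _
          · cases n with
            | zero => rw [pow_zero, pow_zero]; exact (ContinuousLinearMap.norm_id_le : ‖(1 : H →L[ℂ] H)‖ ≤ 1)
            | succ m => exact norm_pow_le' _ (Nat.succ_pos m)
      _ = C * ‖B‖ ^ n := by rw [hC]; ring
  have hCnn : 0 ≤ C := by
    rw [hC]; positivity
  have hbound : ∀ n : ℕ, (∫ s in Set.Ioc t₁ t₂, ‖F n s‖) ≤ (c * C) * (c * ‖B‖) ^ n := by
    intro n
    have hmeas : volume (Set.Ioc t₁ t₂) < ⊤ := by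
      rw [Real.volume_Ioc]; exact ENNReal.ofReal_lt_top
    have hle : ∀ s ∈ Set.Ioc t₁ t₂, ‖‖F n s‖‖ ≤ c ^ n * ‖T ^ (n + 1)‖ := by
      intro s hs
      rw [norm_norm, hF, norm_smul, norm_pow, Complex.norm_real, Real.norm_eq_abs,
        abs_of_nonpos (by linarith [hs.1])]
      have hle2 : (-(t₁ - s)) ^ n ≤ c ^ n :=
        pow_le_pow_left₀ (by linarith [hs.1]) (by linarith [hs.2]) n
      exact mul_le_mul_of_nonneg_right hle2 (norm_nonneg _)
    have h1 := norm_setIntegral_le_of_norm_le_const hmeas hle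
    rw [Real.norm_of_nonneg (integral_nonneg fun s => norm_nonneg _), measureReal_def] at h1
    have h2 : (volume (Set.Ioc t₁ t₂)).toReal = c := by
      rw [Real.volume_Ioc, ENNReal.toReal_ofReal hc0.le]
    rw [h2] at h1
    calc (∫ s in Set.Ioc t₁ t₂, ‖F n s‖) ≤ c ^ n * ‖T ^ (n + 1)‖ * c := h1
      _ ≤ c ^ n * (C * ‖B‖ ^ n) * c := by gcongr; exact hTn n
      _ = (c * C) * (c * ‖B‖) ^ n := by rw [mul_pow]; ring
  have hsummable : Summable (fun n => ∫ s in Set.Ioc t₁ t₂, ‖F n s‖) := by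
    refine Summable.of_nonneg_of_le (fun n => integral_nonneg fun s => norm_nonneg _)
      hbound ?_
    exact (summable_geometric_of_lt_one (by positivity) hsmall').mul_left (c * C)
  have hbig := hasSum_integral_of_summable_integral_norm hFint hsummable
  -- identify the sum
  have hgoal_sum : (∫ s in t₁..t₂, sqrtV.comp ((Ring.inverse (A s)).comp sqrtV))
      = ∫ s in Set.Ioc t₁ t₂, (∑' n, F n s) := by
    rw [intervalIntegral.integral_of_le ht.le]
    exact (setIntegral_congr_fun measurableSet_Ioc (fun s hs => (hsumpt s hs).tsum_eq)).symm
  -- identify each term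
  have hterm : ∀ n : ℕ,
      (((-1 : ℂ) ^ n / (n + 1)) * ((t₂ : ℂ) - (t₁ : ℂ)) ^ (n + 1)) •
        (sqrtV.comp ((Ring.inverse (A t₁)).comp sqrtV)) ^ (n + 1)
      = ∫ s in Set.Ioc t₁ t₂, F n s := by
    intro n
    have hTcomp : sqrtV.comp ((Ring.inverse (A t₁)).comp sqrtV) = T := by
      rw [hTdef, hR₁def, mul_assoc]; rfl
    have h0 : (∫ s in Set.Ioc t₁ t₂, F n s) = ∫ s in t₁..t₂, F n s :=
      (intervalIntegral.integral_of_le ht.le).symm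
    have h1 : (∫ s in t₁..t₂, F n s)
        = (∫ s in t₁..t₂, ((t₁ - s : ℝ) : ℂ) ^ n) • T ^ (n + 1) := by
      rw [hF]
      exact intervalIntegral.integral_smul_const _ _
    have h2 : (∫ s in t₁..t₂, ((t₁ - s : ℝ) : ℂ) ^ n)
        = ((∫ s in t₁..t₂, (t₁ - s) ^ n : ℝ) : ℂ) := by
      simp_rw [← Complex.ofReal_pow]
      exact RCLike.intervalIntegral_ofReal
    have h3 : (∫ s in t₁..t₂, (t₁ - s) ^ n : ℝ)
        = (-1) ^ n * ((t₂ - t₁) ^ (n + 1) / (n + 1)) := by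
      have e1 : ∀ s : ℝ, (t₁ - s) ^ n = (-1) ^ n * (s - t₁) ^ n := by
        intro s
        rw [show t₁ - s = -(s - t₁) by ring, neg_pow]
      simp_rw [e1]
      rw [intervalIntegral.integral_const_mul]
      have e2 : (∫ s in t₁..t₂, (s - t₁) ^ n : ℝ) = ∫ u in (0:ℝ)..(t₂ - t₁), u ^ n := by
        have := intervalIntegral.integral_comp_sub_right (a := t₁) (b := t₂)
          (fun u => u ^ n) t₁
        simpa using this
      rw [e2, integral_pow]
      simp
    rw [hTcomp, h0, h1, h2, h3]
    congr 1
    push_cast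
    ring
  rw [hgoal_sum]
  have hfe := funext hterm
  rw [← hfe] at hbig
  exact hbig
end
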